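/- arXiv:2505.10230 — 2 statements merged into one kernel-verified Lean document; each statement's English description precedes it below -/
import Mathlib

section
/- Let z = (α, β, M) ∈ Z with |p| ≤ rs, |α| ≤ r, |β| = s and M₀(z) = 0. Then z ∈ K_{r,s}^{Λ,1}. -/
open Matrix

noncomputable section

/-- Vectors in ℝ³. -/
abbrev V3 := Fin 3 → ℝ
/-- 3×3 real matrices. -/
abbrev Mat3 := Matrix (Fin 3) (Fin 3) ℝ
/-- The state space Z = ℝ³ × ℝ³ × ℝ^{3×3}. -/
abbrev Z := V3 × V3 × Mat3

/-- Euclidean dot product on ℝ³. -/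
def dot3 (u v : V3) : ℝ := ∑ i, u i * v i
/-- Euclidean norm on ℝ³. -/
def norm3 (v : V3) : ℝ := Real.sqrt (dot3 v v)
/-- Outer (tensor) product u ⊗ v. -/
def outer (u v : V3) : Mat3 := Matrix.vecMulVec u v

/-- The constraint set K_{r,s}. -/
def Krs (r s p : ℝ) : Set Z :=
  {z | z.2.2 = outer z.1 z.2.1 + p • (1 : Mat3) ∧ norm3 z.1 = r ∧ norm3 z.2.1 = s}

/-- The wave cone Λ. -/
def waveCone : Set Z :=
  {z | ∃ (ξ : V3) (c : ℝ), ξ ≠ 0 ∧ z.2.2 *ᵥ ξ + c • z.1 = 0 ∧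
    z.2.2ᵀ *ᵥ ξ + c • z.2.1 = 0 ∧ dot3 z.1 ξ = 0 ∧ dot3 z.2.1 ξ = 0}

/-- M₀(z) = α⊗β − M + p·Id. -/
def M0 (p : ℝ) (z : Z) : Mat3 := outer z.1 z.2.1 - z.2.2 + p • (1 : Mat3)

/-- G(z) = √((r² − |α|²)(s² − |β|²)). -/
def Gfun (r s : ℝ) (z : Z) : ℝ :=
  Real.sqrt ((r ^ 2 - norm3 z.1 ^ 2) * (s ^ 2 - norm3 z.2.1 ^ 2))

/-- Iterated lamination sets K_{r,s}^{Λ,i}. -/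
def lamSet (r s p : ℝ) : ℕ → Set Z
  | 0 => Krs r s p
  | (i + 1) => {z | ∃ zb ∈ waveCone, ∃ t₁ t₂ : ℝ, t₁ ≤ 0 ∧ 0 ≤ t₂ ∧
      z + t₁ • zb ∈ lamSet r s p i ∧ z + t₂ • zb ∈ lamSet r s p i}

/-- Nuclear norm: trace of the PSD square root of AᵀA. -/
def nuclearNorm (A : Mat3) : ℝ :=
  ((Matrix.posSemidef_conjTranspose_mul_self A).1.eigenvectorUnitary.1 *
    Matrix.diagonal (Real.sqrt ∘ (Matrix.posSemidef_conjTranspose_mul_self A).1.eigenvalues) *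
    (star (Matrix.posSemidef_conjTranspose_mul_self A).1.eigenvectorUnitary : Mat3)).trace

/-- f₀(A) = (A₂₃, A₃₁, A₁₂) (0-indexed: (A 1 2, A 2 0, A 0 1)). -/
def f0 (A : Mat3) : V3 := ![A 1 2, A 2 0, A 0 1]

/-- Frobenius norm of a matrix. -/
def frobNorm (A : Mat3) : ℝ := Real.sqrt (∑ i, ∑ j, A i j ^ 2)

/-- Λ-convexity of a set. -/
def LambdaConvex (S : Set Z) : Prop :=
  ∀ z₁ ∈ S, ∀ z₂ ∈ S, z₁ - z₂ ∈ waveCone →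
    ∀ t : ℝ, t ∈ Set.Icc (0 : ℝ) 1 → z₁ + t • (z₂ - z₁) ∈ S

/-- The Λ-convex hull of K_{r,s}: the intersection of all Λ-convex sets containing it. -/
def lambdaHull (r s p : ℝ) : Set Z := ⋂₀ {S : Set Z | LambdaConvex S ∧ Krs r s p ⊆ S}

-- aux lemmas
lemma exists_perp (a : V3) : ∃ ξ : V3, ξ ≠ 0 ∧ dot3 a ξ = 0 := by
  by_cases h0 : a 0 = 0
  · by_cases h1 : a 1 = 0
    · refine ⟨![1,0,0], ?_, ?_⟩
      · intro h; have := congrFun h 0; simp at this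
      · simp [dot3, Fin.sum_univ_three, h0, h1]
    · refine ⟨![0, -a 2, a 1], ?_, ?_⟩
      · intro h; have := congrFun h 2; simp at this; exact h1 this
      · simp [dot3, Fin.sum_univ_three]; ring
  · refine ⟨![-a 1, a 0, 0], ?_, ?_⟩
    · intro h; have := congrFun h 1; simp at this; exact h0 this
    · simp [dot3, Fin.sum_univ_three]; ring

lemma dot3_pos (a : V3) (ha : a ≠ 0) : 0 < dot3 a a := by
  obtain ⟨i, hi⟩ := Function.ne_iff.mp ha
  simp only [Pi.zero_apply] at hi
  have h1 : 0 < a i * a i := mul_self_pos.mpr hi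
  have h2 : a i * a i ≤ ∑ j, a j * a j :=
    Finset.single_le_sum (fun j _ => mul_self_nonneg (a j)) (Finset.mem_univ i)
  rw [dot3]; linarith

lemma norm3_pos (a : V3) (ha : a ≠ 0) : 0 < norm3 a :=
  Real.sqrt_pos.mpr (dot3_pos a ha)

lemma norm3_smul (c : ℝ) (a : V3) : norm3 (c • a) = |c| * norm3 a := by
  have h : dot3 (c • a) (c • a) = c ^ 2 * dot3 a a := by
    simp [dot3, Fin.sum_univ_three]; ring
  rw [norm3, h, norm3, Real.sqrt_mul (sq_nonneg c), Real.sqrt_sq_eq_abs]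

lemma outer_smul_add (lam t : ℝ) (a b : V3) :
    outer ((lam + t) • a) b = outer (lam • a) b + t • outer a b := by
  ext i j
  simp [outer, vecMulVec, Matrix.smul_apply, Matrix.add_apply]
  ring

lemma shift_eq (p lam t : ℝ) (a b : V3) :
    ((lam • a, b, outer (lam • a) b + p • (1 : Mat3)) : Z) + t • ((a, 0, outer a b) : Z)
      = (((lam + t) • a, b, outer ((lam + t) • a) b + p • (1 : Mat3)) : Z) := by
  simp only [Prod.smul_mk, Prod.mk_add_mk, Prod.mk.injEq]
  refine ⟨by rw [add_smul], by simp, by rw [outer_smul_add]; abel⟩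

lemma key (r s p : ℝ) (hr : 0 < r) (a b : V3) (lam : ℝ) (hlam : 0 ≤ lam) (ha : a ≠ 0)
    (hb : norm3 b = s) (hle : lam * norm3 a ≤ r) :
    ((lam • a, b, outer (lam • a) b + p • (1 : Mat3)) : Z) ∈ lamSet r s p 1 := by
  obtain ⟨ξ, hξ, hperp⟩ := exists_perp a
  have hna : 0 < norm3 a := norm3_pos a ha
  refine ⟨(a, 0, outer a b), ?_, -(r / norm3 a) - lam, r / norm3 a - lam, ?_, ?_, ?_, ?_⟩
  · refine ⟨ξ, -(dot3 b ξ), hξ, ?_, ?_, hperp, by simp [dot3]⟩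
    · funext i
      simp [outer, vecMulVec, mulVec, dotProduct, Fin.sum_univ_three, dot3] at *
      ring
    · funext i
      simp only [dot3, Fin.sum_univ_three] at hperp
      simp [outer, vecMulVec, mulVec, dotProduct, Fin.sum_univ_three, Matrix.transpose_apply]
      linear_combination b i * hperp
  · have : 0 < r / norm3 a := div_pos hr hna
    linarith
  · rw [sub_nonneg, le_div_iff₀ hna]; exact hle
  · show _ ∈ Krs r s p
    rw [shift_eq]
    have ht : lam + (-(r / norm3 a) - lam) = -(r / norm3 a) := by ring
    refine ⟨rfl, ?_, hb⟩
    rw [ht, norm3_smul, abs_neg, abs_of_pos (div_pos hr hna),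
      div_mul_cancel₀ _ (ne_of_gt hna)]
  · show _ ∈ Krs r s p
    rw [shift_eq]
    have ht : lam + (r / norm3 a - lam) = r / norm3 a := by ring
    refine ⟨rfl, ?_, hb⟩
    rw [ht, norm3_smul, abs_of_pos (div_pos hr hna),
      div_mul_cancel₀ _ (ne_of_gt hna)]

theorem stmt12 (r s p : ℝ) (hr : 0 < r) (hs : 0 < s) (z : Z)
    (hp : |p| ≤ r * s) (hα : norm3 z.1 ≤ r) (hβ : norm3 z.2.1 = s)
    (hM : M0 p z = 0) :
    z ∈ lamSet r s p 1 := by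
  obtain ⟨α, β, M⟩ := z
  simp only at hα hβ ⊢
  have hM' : M = outer α β + p • (1 : Mat3) := by
    have h : outer α β - M + p • (1 : Mat3) = 0 := hM
    have h2 : (outer α β + p • (1 : Mat3)) - M = 0 := by rw [← h]; abel
    exact (sub_eq_zero.mp h2).symm
  subst hM'
  by_cases h0 : α = 0
  · subst h0
    have hb : β ≠ 0 := by
      intro h; rw [h] at hβ
      have : norm3 (0 : V3) = 0 := by simp [norm3, dot3]
      rw [this] at hβ; linarith
    have := key r s p hr β β 0 le_rfl hb hβ (by simp; positivity)
    simpa using this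
  · have := key r s p hr α β 1 zero_le_one h0 hβ (by simpa using hα)
    simpa using this
end
end

section
/- Let z = (α, β, M) ∈ Z with |α| < r and |β| < s, and set γ̄ = (s² − |β|²)/((r² − |α|²) + (s² − |β|²)). Then γ̄ ∈ [0,1], and H_{γ̄}(z) < 0 if and only if ‖M₀(z)‖_n < G(z), where H_γ(z) = γ(|α|² − r²) + (1 − γ)(|β|² − s²) + 2√(γ(1 − γ))·‖M₀(z)‖_n. -/
open Matrix

noncomputable section

lemma psd_trace_nonneg {A : Mat3} (h : A.PosSemidef) : 0 ≤ A.trace := by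
  rw [Matrix.trace]
  apply Finset.sum_nonneg
  intro i _
  exact h.diag_nonneg

lemma nuclearNorm_nonneg (A : Mat3) : 0 ≤ nuclearNorm A := by
  unfold nuclearNorm
  rw [Matrix.trace_mul_cycle, Unitary.star_mul_self_of_mem
    (Matrix.posSemidef_conjTranspose_mul_self A).1.eigenvectorUnitary.2, one_mul,
    Matrix.trace_diagonal]
  exact Finset.sum_nonneg fun i _ => Real.sqrt_nonneg _

theorem stmt13 (r s p : ℝ) (hr : 0 < r) (hs : 0 < s) (z : Z)
    (hα : norm3 z.1 < r) (hβ : norm3 z.2.1 < s) (γ : ℝ)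
    (hγdef : γ = (s ^ 2 - norm3 z.2.1 ^ 2) /
      ((r ^ 2 - norm3 z.1 ^ 2) + (s ^ 2 - norm3 z.2.1 ^ 2))) :
    γ ∈ Set.Icc (0 : ℝ) 1 ∧
      (γ * (norm3 z.1 ^ 2 - r ^ 2) + (1 - γ) * (norm3 z.2.1 ^ 2 - s ^ 2) +
          2 * Real.sqrt (γ * (1 - γ)) * nuclearNorm (M0 p z) < 0 ↔
        nuclearNorm (M0 p z) < Gfun r s z) := by
  have hα0 : 0 ≤ norm3 z.1 := Real.sqrt_nonneg _
  have hβ0 : 0 ≤ norm3 z.2.1 := Real.sqrt_nonneg _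
  set a : ℝ := r ^ 2 - norm3 z.1 ^ 2 with ha
  set b : ℝ := s ^ 2 - norm3 z.2.1 ^ 2 with hb
  have ha0 : 0 < a := by nlinarith
  have hb0 : 0 < b := by nlinarith
  have hab : 0 < a + b := by linarith
  have h1γ : 1 - γ = a / (a + b) := by
    rw [hγdef]; field_simp; ring
  set N := nuclearNorm (M0 p z) with hN
  have hN0 : 0 ≤ N := nuclearNorm_nonneg _
  have hsab : 0 < Real.sqrt (a * b) := Real.sqrt_pos.mpr (by positivity)
  have hsq : Real.sqrt (a * b) ^ 2 = a * b := Real.sq_sqrt (by positivity)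
  have hsqrt : Real.sqrt (γ * (1 - γ)) = Real.sqrt (a * b) / (a + b) := by
    have harg : γ * (1 - γ) = a * b / (a + b) ^ 2 := by
      rw [hγdef]; field_simp; ring
    rw [harg, Real.sqrt_div (by positivity), Real.sqrt_sq hab.le]
  have hG : Gfun r s z = Real.sqrt (a * b) := by
    rw [Gfun, ha, hb]
  constructor
  · constructor
    · rw [hγdef]; positivity
    · rw [hγdef]; rw [div_le_one hab]; linarith
  · rw [hG, hsqrt, h1γ, hγdef]
    rw [show (norm3 z.1 ^ 2 - r ^ 2) = -a by rw [ha]; ring,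
      show (norm3 z.2.1 ^ 2 - s ^ 2) = -b by rw [hb]; ring]
    constructor
    · intro h
      by_contra hc
      push_neg at hc
      have : Real.sqrt (a * b) * Real.sqrt (a * b) ≤ Real.sqrt (a * b) * N :=
        mul_le_mul_of_nonneg_left hc hsab.le
      have h2 : a * b ≤ Real.sqrt (a * b) * N := by nlinarith
      have hlhs : b / (a + b) * -a + a / (a + b) * -b +
          2 * (Real.sqrt (a * b) / (a + b)) * N =
          (2 * (Real.sqrt (a * b) * N) - 2 * (a * b)) / (a + b) := by
        field_simp; ring
      rw [hlhs] at h
      have := (div_neg_iff.mp h)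
      rcases this with ⟨h3, h4⟩ | ⟨h3, h4⟩ <;> linarith
    · intro h
      have h2 : Real.sqrt (a * b) * N < Real.sqrt (a * b) * Real.sqrt (a * b) :=
        mul_lt_mul_of_pos_left h hsab
      have h3 : Real.sqrt (a * b) * N < a * b := by nlinarith
      have hlhs : b / (a + b) * -a + a / (a + b) * -b +
          2 * (Real.sqrt (a * b) / (a + b)) * N =
          (2 * (Real.sqrt (a * b) * N) - 2 * (a * b)) / (a + b) := by
        field_simp; ring
      rw [hlhs]
      exact div_neg_of_neg_of_pos (by linarith) hab
end
end
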